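/- arXiv:1301.6662 — 5 statements merged into one kernel-verified Lean document; each statement's English description precedes it below -/
import Mathlib

section
/- Let v, ω ∈ ℝ be constants and let β, λβ : [t₀, t₁] → ℝ be differentiable functions satisfying β'(t) = ω − v·sin(β(t)) and λβ'(t) = v·λβ(t)·cos(β(t)) for all t ∈ [t₀, t₁]. Then the function t ↦ λβ(t)·(ω − v·sin(β(t))) is constant on [t₀, t₁]; in particular, if ω − v·sin(β(t)) ≠ 0 for all t, then λβ(t) = K₂ / (ω − v·sin(β(t))) where K₂ = λβ(t₀)·(ω − v·sin(β(t₀))). -/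
open Real Set

/- Differentiating `λβ (ω - v sin β)` gives `v λβ cos β · β' - λβ · v cos β · β'`, which is `0`;
a function with zero derivative on an interval is constant there. -/

theorem hasDerivAt_mul_sub_mul_sin_zero {v ω t : ℝ} {β lβ : ℝ → ℝ}
    (hβ : HasDerivAt β (ω - v * sin (β t)) t)
    (hlβ : HasDerivAt lβ (v * lβ t * cos (β t)) t) :
    HasDerivAt (fun s => lβ s * (ω - v * sin (β s))) 0 t :=
  (hlβ.fun_mul ((hβ.sin.const_mul v).const_sub ω)).congr_deriv (by ring)

theorem eq_left_of_hasDerivAt_zero_Icc {f : ℝ → ℝ} {a b : ℝ}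
    (hf : ∀ x ∈ Icc a b, HasDerivAt f 0 x) : ∀ x ∈ Icc a b, f x = f a :=
  constant_of_has_deriv_right_zero (fun x hx => (hf x hx).continuousAt.continuousWithinAt)
    fun x hx => (hf x (Ico_subset_Icc_self hx)).hasDerivWithinAt

theorem stmt2_general (t₀ t₁ : ℝ) (v ω : ℝ) (β lβ : ℝ → ℝ)
    (hβ : ∀ t ∈ Icc t₀ t₁, HasDerivAt β (ω - v * Real.sin (β t)) t)
    (hlβ : ∀ t ∈ Icc t₀ t₁, HasDerivAt lβ (v * lβ t * Real.cos (β t)) t) :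
    (∀ t ∈ Icc t₀ t₁,
      lβ t * (ω - v * Real.sin (β t)) = lβ t₀ * (ω - v * Real.sin (β t₀))) ∧
    ((∀ t ∈ Icc t₀ t₁, ω - v * Real.sin (β t) ≠ 0) →
      ∀ t ∈ Icc t₀ t₁,
        lβ t = lβ t₀ * (ω - v * Real.sin (β t₀)) / (ω - v * Real.sin (β t))) := by
  have conserved := eq_left_of_hasDerivAt_zero_Icc fun t ht =>
    hasDerivAt_mul_sub_mul_sin_zero (hβ t ht) (hlβ t ht)
  exact ⟨conserved, fun hne t ht => (eq_div_iff (hne t ht)).2 (conserved t ht)⟩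

/-- Along a regular primitive (constant controls `v, ω`) of the
car-like robot with one trailer, with `β' = ω − v sin β` and
`λβ' = v λβ cos β`, the quantity `λβ · (ω − v sin β)` is constant; in
particular if `ω − v sin β` never vanishes, then
`λβ t = K₂ / (ω − v sin (β t))` with `K₂ = λβ t₀ · (ω − v sin (β t₀))`. -/
theorem stmt2 (t₀ t₁ : ℝ) (ht : t₀ ≤ t₁) (v ω : ℝ) (β lβ : ℝ → ℝ)
    (hβ : ∀ t ∈ Icc t₀ t₁, HasDerivAt β (ω - v * Real.sin (β t)) t)
    (hlβ : ∀ t ∈ Icc t₀ t₁, HasDerivAt lβ (v * lβ t * Real.cos (β t)) t) :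
    (∀ t ∈ Icc t₀ t₁,
      lβ t * (ω - v * Real.sin (β t)) = lβ t₀ * (ω - v * Real.sin (β t₀))) ∧
    ((∀ t ∈ Icc t₀ t₁, ω - v * Real.sin (β t) ≠ 0) →
      ∀ t ∈ Icc t₀ t₁,
        lβ t = lβ t₀ * (ω - v * Real.sin (β t₀)) / (ω - v * Real.sin (β t))) :=
  stmt2_general t₀ t₁ v ω β lβ hβ hlβ
end

section
/- Let v, ω ∈ {−1, 1} and K₁ ∈ ℝ, and define f(t) = 2·(v/ω)·arctan((t − 2v + K₁)/(t + K₁)) for t ≠ −K₁. Then f is differentiable on its domain and satisfies f'(t) = ω − v·sin(f(t)) for all t ≠ −K₁. -/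
/-!
With `s = t + K₁` and `u = (s - 2v)/s`, one has `u' = 2v/s²` and `sin (2 arctan u) = 2u/(1 + u²)`.
Since `v² = ω² = 1`, both `f'` and `ω - v sin f` reduce to `4ω / (s² + (s - 2v)²)`:
on the right because `s² + (s - 2v)² - 2 s (s - 2v) = (2v)² = 4`.
-/

open Real

theorem Real.sin_two_mul_arctan (u : ℝ) : sin (2 * arctan u) = 2 * u / (1 + u ^ 2) := by
  have hpos : (0 : ℝ) < 1 + u ^ 2 := by positivity
  rw [sin_two_mul, sin_arctan, cos_arctan]
  field_simp
  rw [sq_sqrt hpos.le]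

theorem Real.sin_mul_of_eq_neg_one_or_eq_one {c : ℝ} (hc : c = -1 ∨ c = 1) (x : ℝ) :
    sin (c * x) = c * sin x := by
  rcases hc with rfl | rfl <;> simp

theorem Real.hasDerivAt_arctan_div_add {a b t : ℝ} (ht : t + b ≠ 0) :
    HasDerivAt (fun x => arctan ((x + a) / (x + b)))
      ((b - a) / ((t + b) ^ 2 + (t + a) ^ 2)) t := by
  have hquot : HasDerivAt (fun x => (x + a) / (x + b))
      ((1 * (t + b) - (t + a) * 1) / (t + b) ^ 2) t :=
    ((hasDerivAt_id t).add_const a).div ((hasDerivAt_id t).add_const b) ht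
  refine hquot.arctan.congr_deriv ?_
  field_simp
  ring

/-- The closed form
`f t = 2 (v/ω) arctan ((t − 2v + K₁)/(t + K₁))` solves the trailer-angle ODE
`f' = ω − v sin f` for constant controls `v, ω ∈ {−1, 1}`, on its domain
`t ≠ −K₁`. -/
theorem stmt3 (v ω K₁ : ℝ) (hv : v = -1 ∨ v = 1) (hω : ω = -1 ∨ ω = 1)
    (f : ℝ → ℝ)
    (hf : ∀ t : ℝ, t ≠ -K₁ →
      f t = 2 * (v / ω) * Real.arctan ((t - 2 * v + K₁) / (t + K₁))) :
    ∀ t : ℝ, t ≠ -K₁ → HasDerivAt f (ω - v * Real.sin (f t)) t := by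
  intro t ht
  have hs : t + K₁ ≠ 0 := fun h => ht (eq_neg_of_add_eq_zero_left h)
  have hf_nhds :
      (fun x => 2 * (v / ω) * arctan ((x + (K₁ - 2 * v)) / (x + K₁))) =ᶠ[nhds t] f := by
    filter_upwards [isOpen_ne.mem_nhds ht] with x hx
    rw [hf x hx]
    ring_nf
  have hc : v / ω = -1 ∨ v / ω = 1 := by
    rcases hv with rfl | rfl <;> rcases hω with rfl | rfl <;> norm_num
  refine (((hasDerivAt_arctan_div_add hs).const_mul _).congr_of_eventuallyEq
    hf_nhds.symm).congr_deriv ?_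
  have hsin : sin (f t) = v / ω * sin (2 * arctan ((t - 2 * v + K₁) / (t + K₁))) := by
    rw [hf t ht, mul_comm 2 (v / ω), mul_assoc, sin_mul_of_eq_neg_one_or_eq_one hc]
  rw [hsin, sin_two_mul_arctan]
  rcases hv with rfl | rfl <;> rcases hω with rfl | rfl <;> field_simp <;> ring
end

section
/- Let c₁, c₂ ∈ ℝ and let θ, β, λβ : [t₀, t₁] → ℝ be differentiable functions and v, ω : [t₀, t₁] → ℝ functions satisfying θ'(t) = ω(t), β'(t) = ω(t) − v(t)·sin(β(t)), and λβ'(t) = v(t)·λβ(t)·cos(β(t)) for all t ∈ [t₀, t₁]. If c₁·sin(θ(t)) − c₂·cos(θ(t)) + λβ(t)·cos(β(t)) = 0 for all t ∈ [t₀, t₁], then the switching function φv(t) = c₁·cos(θ(t)) + c₂·sin(θ(t)) − λβ(t)·sin(β(t)) is constant on [t₀, t₁]. -/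
open Real Set

theorem Convex.eq_of_hasDerivWithinAt_zero {𝕜 G : Type*} [RCLike 𝕜] [NormedAddCommGroup G]
    [NormedSpace 𝕜 G] {f : 𝕜 → G} {s : Set 𝕜} (hs : Convex ℝ s)
    (hf : ∀ x ∈ s, HasDerivWithinAt f 0 s x) {x y : 𝕜} (hx : x ∈ s) (hy : y ∈ s) :
    f x = f y := by
  have h := hs.norm_image_sub_le_of_norm_hasDerivWithin_le hf (C := 0) (by simp) hy hx
  rwa [zero_mul, norm_le_zero_iff, sub_eq_zero] at h

/-- The switching function `φv` of the linear velocity, with `λx = c₁`, `λy = c₂`. -/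
noncomputable def switchingFunction (c₁ c₂ : ℝ) (θ β lβ : ℝ → ℝ) (t : ℝ) : ℝ :=
  c₁ * cos (θ t) + c₂ * sin (θ t) - lβ t * sin (β t)

/-- The `v`-contributions of `λβ'` and `β'` cancel. -/
theorem hasDerivAt_switchingFunction (c₁ c₂ : ℝ) {v ω t : ℝ} {θ β lβ : ℝ → ℝ}
    (hθ : HasDerivAt θ ω t) (hβ : HasDerivAt β (ω - v * sin (β t)) t)
    (hlβ : HasDerivAt lβ (v * lβ t * cos (β t)) t) :
    HasDerivAt (switchingFunction c₁ c₂ θ β lβ)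
      (-ω * (c₁ * sin (θ t) - c₂ * cos (θ t) + lβ t * cos (β t))) t :=
  (((hθ.cos.const_mul c₁).add (hθ.sin.const_mul c₂)).sub (hlβ.mul hβ.sin)).congr_deriv
    (by ring)

/-- Along a `φω`-singular primitive of the car-like robot with
one trailer, the switching function `φv = c₁ cos θ + c₂ sin θ − λβ sin β`
is constant. -/
theorem stmt8 (t₀ t₁ : ℝ) (c₁ c₂ : ℝ) (θ β lβ v ω : ℝ → ℝ)
    (hθ : ∀ t ∈ Icc t₀ t₁, HasDerivAt θ (ω t) t)
    (hβ : ∀ t ∈ Icc t₀ t₁, HasDerivAt β (ω t - v t * Real.sin (β t)) t)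
    (hlβ : ∀ t ∈ Icc t₀ t₁, HasDerivAt lβ (v t * lβ t * Real.cos (β t)) t)
    (hid : ∀ t ∈ Icc t₀ t₁,
      c₁ * Real.sin (θ t) - c₂ * Real.cos (θ t) + lβ t * Real.cos (β t) = 0) :
    ∀ t ∈ Icc t₀ t₁, ∀ s ∈ Icc t₀ t₁,
      c₁ * Real.cos (θ t) + c₂ * Real.sin (θ t) - lβ t * Real.sin (β t)
        = c₁ * Real.cos (θ s) + c₂ * Real.sin (θ s) - lβ s * Real.sin (β s) := by
  have hderiv : ∀ t ∈ Icc t₀ t₁,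
      HasDerivWithinAt (switchingFunction c₁ c₂ θ β lβ) 0 (Icc t₀ t₁) t := by
    intro t ht
    have h := hasDerivAt_switchingFunction c₁ c₂ (hθ t ht) (hβ t ht) (hlβ t ht)
    rw [hid t ht, mul_zero] at h
    exact h.hasDerivWithinAt
  intro t ht s hs
  exact (convex_Icc t₀ t₁).eq_of_hasDerivWithinAt_zero hderiv ht hs
end

section
/- Let φv ≠ 0 be a real constant, let v : [t₀, t₁] → ℝ satisfy v(t)² = 1 for all t, and let β, λθ : [t₀, t₁] → ℝ be differentiable functions and ω : [t₀, t₁] → ℝ a function satisfying λθ'(t) = v(t)·λθ(t)·cos(β(t)), β'(t) = ω(t) − v(t)·sin(β(t)), and ω(t) = v(t)·λθ(t)/φv for all t ∈ [t₀, t₁]. Then the function t ↦ λθ(t)² − 2·φv·λθ(t)·sin(β(t)) is constant on [t₀, t₁]; equivalently, λθ(t₀)² − λθ(t)² = 2·φv·(λθ(t₀)·sin(β(t₀)) − λθ(t)·sin(β(t))) for all t ∈ [t₀, t₁]. -/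
open Real Set

/-!
Differentiating `λθ² − 2 φv λθ sin β` along the system gives
`2 v λθ² cos β − 2 φv (v λθ cos β sin β + λθ cos β (v λθ / φv − v sin β)) = 0`:
the `sin β` terms cancel and `φv · (v λθ / φv) = v λθ` kills the rest.
-/

theorem hasDerivAt_sq_sub_mul_mul_sin_eq_zero {lθ β : ℝ → ℝ} {φv v t : ℝ} (hφv : φv ≠ 0)
    (hlθ : HasDerivAt lθ (v * lθ t * cos (β t)) t)
    (hβ : HasDerivAt β (v * lθ t / φv - v * sin (β t)) t) :
    HasDerivAt (fun s => lθ s ^ 2 - 2 * φv * (lθ s * sin (β s))) 0 t := by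
  refine ((hlθ.pow 2).sub ((hlθ.mul hβ.sin).const_mul (2 * φv))).congr_deriv ?_
  field_simp
  ring

theorem eq_of_hasDerivAt_zero_on_Icc {f : ℝ → ℝ} {a b : ℝ}
    (hf : ∀ t ∈ Icc a b, HasDerivAt f 0 t) : ∀ t ∈ Icc a b, f t = f a :=
  constant_of_has_deriv_right_zero (fun t ht => (hf t ht).continuousAt.continuousWithinAt)
    (fun t ht => (hf t (Ico_subset_Icc_self ht)).hasDerivWithinAt)

theorem stmt9_general (t₀ t₁ : ℝ) (φv : ℝ) (hφv : φv ≠ 0)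
    (v ω β lθ : ℝ → ℝ)
    (hlθ : ∀ t ∈ Icc t₀ t₁, HasDerivAt lθ (v t * lθ t * Real.cos (β t)) t)
    (hβ : ∀ t ∈ Icc t₀ t₁, HasDerivAt β (ω t - v t * Real.sin (β t)) t)
    (hω : ∀ t ∈ Icc t₀ t₁, ω t = v t * lθ t / φv) :
    ∀ t ∈ Icc t₀ t₁,
      (lθ t₀) ^ 2 - (lθ t) ^ 2
        = 2 * φv * (lθ t₀ * Real.sin (β t₀) - lθ t * Real.sin (β t)) := by
  have hconst := eq_of_hasDerivAt_zero_on_Icc fun t ht =>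
    hasDerivAt_sq_sub_mul_mul_sin_eq_zero hφv (hlθ t ht) (hω t ht ▸ hβ t ht)
  intro t ht
  linarith [hconst t ht]

/-- Along a `φω`-singular primitive (`λβ = −λθ`, `v² = 1`,
`ω = v λθ / φv`, `β' = ω − v sin β`, `λθ' = v λθ cos β`), the quantity
`λθ² − 2 φv λθ sin β` is conserved. -/
theorem stmt9 (t₀ t₁ : ℝ) (ht : t₀ ≤ t₁) (φv : ℝ) (hφv : φv ≠ 0)
    (v ω β lθ : ℝ → ℝ) (hv : ∀ t ∈ Icc t₀ t₁, (v t) ^ 2 = 1)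
    (hlθ : ∀ t ∈ Icc t₀ t₁, HasDerivAt lθ (v t * lθ t * Real.cos (β t)) t)
    (hβ : ∀ t ∈ Icc t₀ t₁, HasDerivAt β (ω t - v t * Real.sin (β t)) t)
    (hω : ∀ t ∈ Icc t₀ t₁, ω t = v t * lθ t / φv) :
    ∀ t ∈ Icc t₀ t₁,
      (lθ t₀) ^ 2 - (lθ t) ^ 2
        = 2 * φv * (lθ t₀ * Real.sin (β t₀) - lθ t * Real.sin (β t)) :=
  stmt9_general t₀ t₁ φv hφv v ω β lθ hlθ hβ hω
end

section
/- Let φv ≠ 0 be a real constant, let v : [t₀, t₁] → ℝ satisfy v(t)² = 1 for all t, and let β, λθ : [t₀, t₁] → ℝ be differentiable functions and ω : [t₀, t₁] → ℝ a function satisfying λθ'(t) = v(t)·λθ(t)·cos(β(t)), β'(t) = ω(t) − v(t)·sin(β(t)), and ω(t) = v(t)·λθ(t)/φv for all t ∈ [t₀, t₁]. If there exists t* ∈ [t₀, t₁] with λθ(t*) = 0, then either λθ(t₀) = 0 or λθ(t₀) = 2·φv·sin(β(t₀)). -/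
open Real Set

/-!
Along a singular primitive the quantity `λθ² - 2 φv λθ sin β` is conserved: its derivative
vanishes identically once `ω = v λθ / φv` is substituted. It is therefore zero at `t₀` as soon as
`λθ` vanishes somewhere, and `λθ (λθ - 2 φv sin β) = 0` at `t₀` is the claim.
-/

theorem hasDerivAt_sq_sub_mul_sin_eq_zero {lθ β : ℝ → ℝ} {t φv v : ℝ} (hφv : φv ≠ 0)
    (hlθ : HasDerivAt lθ (v * lθ t * cos (β t)) t)
    (hβ : HasDerivAt β (v * lθ t / φv - v * sin (β t)) t) :
    HasDerivAt (fun s => lθ s ^ 2 - 2 * φv * lθ s * sin (β s)) 0 t := by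
  refine ((hlθ.fun_pow 2).fun_sub ((hlθ.const_mul (2 * φv)).fun_mul hβ.sin)).congr_deriv ?_
  field_simp
  ring

theorem stmt11_general (t₀ t₁ : ℝ) (φv : ℝ) (hφv : φv ≠ 0)
    (v ω β lθ : ℝ → ℝ)
    (hlθ : ∀ t ∈ Icc t₀ t₁, HasDerivAt lθ (v t * lθ t * Real.cos (β t)) t)
    (hβ : ∀ t ∈ Icc t₀ t₁, HasDerivAt β (ω t - v t * Real.sin (β t)) t)
    (hω : ∀ t ∈ Icc t₀ t₁, ω t = v t * lθ t / φv)
    (hstar : ∃ tstar ∈ Icc t₀ t₁, lθ tstar = 0) :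
    lθ t₀ = 0 ∨ lθ t₀ = 2 * φv * Real.sin (β t₀) := by
  obtain ⟨ts, hts, hts0⟩ := hstar
  set E : ℝ → ℝ := fun s => lθ s ^ 2 - 2 * φv * lθ s * sin (β s)
  have hE' : ∀ t ∈ Icc t₀ t₁, HasDerivAt E 0 t := fun t ht =>
    hasDerivAt_sq_sub_mul_sin_eq_zero hφv (hlθ t ht) (hω t ht ▸ hβ t ht)
  have hconst : E ts = E t₀ :=
    constant_of_has_deriv_right_zero (fun t ht => (hE' t ht).continuousAt.continuousWithinAt)
      (fun t ht => (hE' t (Ico_subset_Icc_self ht)).hasDerivWithinAt) ts hts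
  have hfactor : lθ t₀ * (lθ t₀ - 2 * φv * sin (β t₀)) = 0 := by
    simp only [E, hts0] at hconst
    linear_combination -hconst
  rcases mul_eq_zero.mp hfactor with h | h
  · exact Or.inl h
  · exact Or.inr (sub_eq_zero.mp h)

/-- If a `φω`-singular primitive reaches the line `λθ = 0` at
some time `t*`, then either `λθ t₀ = 0` or `λθ t₀ = 2 φv sin β t₀`. -/
theorem stmt11 (t₀ t₁ : ℝ) (ht : t₀ ≤ t₁) (φv : ℝ) (hφv : φv ≠ 0)
    (v ω β lθ : ℝ → ℝ) (hv : ∀ t ∈ Icc t₀ t₁, (v t) ^ 2 = 1)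
    (hlθ : ∀ t ∈ Icc t₀ t₁, HasDerivAt lθ (v t * lθ t * Real.cos (β t)) t)
    (hβ : ∀ t ∈ Icc t₀ t₁, HasDerivAt β (ω t - v t * Real.sin (β t)) t)
    (hω : ∀ t ∈ Icc t₀ t₁, ω t = v t * lθ t / φv)
    (hstar : ∃ tstar ∈ Icc t₀ t₁, lθ tstar = 0) :
    lθ t₀ = 0 ∨ lθ t₀ = 2 * φv * Real.sin (β t₀) :=
  stmt11_general t₀ t₁ φv hφv v ω β lθ hlθ hβ hω hstar
end
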